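/- (Theorem 1, containment part.) Let P_s and P_t be probability measures on X with P_t absolutely continuous with respect to P_s, density ratio w = dP_t/dP_s satisfying 0 ≤ w(x) ≤ B for all x, and φ Bochner integrable with respect to P_t with μ_t = ∫ φ dP_t. Let x_1,…,x_{n_s} be i.i.d. from P_s and, independently, z_1,…,z_{n_t} be i.i.d. from P_t. For δ ∈ (0,1) set ε_{t'} = √M · ( √(B²/n_s + 1/n_t) + √(1/n_t) ) · (1 + √(2 log(1/δ))). Then with probability at least 1 − 2δ, the target population embedding mean lies within ε_{t'} of the weighted empirical source embedding mean: ‖ μ_t − (1/n_s) Σ_{i=1}^{n_s} w(x_i) φ(x_i) ‖ ≤ ε_{t'} (equivalently, P_t lies in the MMD ball of radius ε_{t'} centered at the weighted empirical source distribution). -/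

import Mathlib

/-!
Only the source sample enters the event. Write `g = w • φ`, so that `‖g‖ ≤ B √M` and
`E_{P_s} g = μ_t`, and let `D(x) = ‖μ_t - (1/n_s) Σ g(x_i)‖`. Moving one sample point moves `D`
by at most `2 B √M / n_s`, so by McDiarmid's inequality `D - E D` is sub-Gaussian with variance
proxy `B² M / n_s` and exceeds `B √M / √n_s · √(2 log (1/δ))` with probability at most `δ`.
Independence kills the cross terms in `E D²`, whence `(E D)² ≤ E D² ≤ B² M / n_s`.
McDiarmid's inequality itself is proved by peeling off one coordinate at a time: conditionally on
the others, the increment is bounded in an interval of length `c_i`, and Hoeffding's lemma applies.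
-/

open MeasureTheory ProbabilityTheory Real
open scoped NNReal ENNReal RealInnerProductSpace

section FinCons

variable {X : Type*} [MeasurableSpace X] (μ : Measure X) [SigmaFinite μ] (n : ℕ)

theorem measurableEmbedding_finCons :
    MeasurableEmbedding fun p : X × (Fin n → X) => (Fin.cons p.1 p.2 : Fin (n + 1) → X) := by
  convert (MeasurableEquiv.piFinSuccAbove (fun _ : Fin (n + 1) => X) 0).symm.measurableEmbedding
    using 1
  ext p : 1
  simp [Fin.consEquiv]

theorem measurePreserving_finCons :
    MeasurePreserving (fun p : X × (Fin n → X) => (Fin.cons p.1 p.2 : Fin (n + 1) → X))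
      (μ.prod (Measure.pi fun _ => μ)) (Measure.pi fun _ => μ) := by
  convert (measurePreserving_piFinSuccAbove (fun _ : Fin (n + 1) => μ) 0).symm using 1
  ext p : 1
  simp [Fin.consEquiv]

variable {μ n} {E : Type*} [NormedAddCommGroup E] [NormedSpace ℝ E]

theorem integral_pi_fin_succ {f : (Fin (n + 1) → X) → E}
    (hf : Integrable f (Measure.pi fun _ => μ)) :
    ∫ x, f x ∂(Measure.pi fun _ => μ) = ∫ y, ∫ a, f (Fin.cons a y) ∂μ ∂(Measure.pi fun _ => μ) := by
  rw [← (measurePreserving_finCons μ n).integral_comp (measurableEmbedding_finCons n),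
    integral_prod_symm]
  exact ((measurePreserving_finCons μ n).integrable_comp_emb (measurableEmbedding_finCons n)).2 hf

end FinCons

theorem exists_forall_mem_Icc_of_abs_sub_le {α : Type*} {u : α → ℝ} {c : ℝ}
    (h : ∀ a b, |u a - u b| ≤ c) : ∃ s, ∀ a, u a ∈ Set.Icc s (s + c) := by
  rcases isEmpty_or_nonempty α with hα | hα
  · exact ⟨0, fun a => isEmptyElim a⟩
  have hbdd : BddBelow (Set.range u) := by
    refine ⟨u hα.some - c, ?_⟩
    rintro _ ⟨a, rfl⟩
    linarith [abs_le.1 (h hα.some a)]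
  refine ⟨⨅ a, u a, fun a => ⟨ciInf_le hbdd a, ?_⟩⟩
  have : u a - c ≤ ⨅ b, u b := le_ciInf (ι := α) fun b => by linarith [abs_le.1 (h a b)]
  linarith

section McDiarmid

variable {X : Type*} [MeasurableSpace X] {μ : Measure X} [IsProbabilityMeasure μ]

theorem ProbabilityTheory.HasSubgaussianMGF.pi_fin_succ {n : ℕ} {f : (Fin (n + 1) → X) → ℝ}
    (hf : Measurable f) {C : ℝ} (hC : ∀ x, |f x| ≤ C) {c₀ c : ℝ≥0}
    (hhead : ∀ y, HasSubgaussianMGF (fun a => f (Fin.cons a y) - ∫ a', f (Fin.cons a' y) ∂μ) c₀ μ)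
    (htail : HasSubgaussianMGF
      (fun y => ∫ a, f (Fin.cons a y) ∂μ - ∫ x, f x ∂(Measure.pi fun _ => μ)) c
      (Measure.pi fun _ => μ)) :
    HasSubgaussianMGF (fun x => f x - ∫ x', f x' ∂(Measure.pi fun _ => μ)) (c₀ + c)
      (Measure.pi fun _ => μ) := by
  set m := ∫ x', f x' ∂(Measure.pi fun _ => μ)
  set F := fun y : Fin n → X => ∫ a, f (Fin.cons a y) ∂μ
  have hint : ∀ t : ℝ, Integrable (fun x => exp (t * (f x - m))) (Measure.pi fun _ => μ) :=
    fun t => integrable_exp_mul_of_mem_Icc (a := -C - m) (b := C - m)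
      (hf.sub_const m).aemeasurable
      (ae_of_all _ fun x => ⟨sub_le_sub_right (abs_le.1 (hC x)).1 m,
        sub_le_sub_right (abs_le.1 (hC x)).2 m⟩)
  refine ⟨hint, fun t => ?_⟩
  have hsplit : ∀ y, ∫ a, exp (t * (f (Fin.cons a y) - m)) ∂μ
      = mgf (fun a => f (Fin.cons a y) - F y) μ t * exp (t * (F y - m)) := by
    intro y
    rw [mgf, ← integral_mul_const]
    congr 1 with a
    rw [← exp_add]
    ring_nf
  calc mgf (fun x => f x - m) (Measure.pi fun _ => μ) t
      = ∫ y, ∫ a, exp (t * (f (Fin.cons a y) - m)) ∂μ ∂(Measure.pi fun _ => μ) :=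
        integral_pi_fin_succ (hint t)
    _ = ∫ y, mgf (fun a => f (Fin.cons a y) - F y) μ t * exp (t * (F y - m))
          ∂(Measure.pi fun _ => μ) := by simp_rw [hsplit]
    _ ≤ ∫ y, exp (c₀ * t ^ 2 / 2) * exp (t * (F y - m)) ∂(Measure.pi fun _ => μ) :=
        integral_mono_of_nonneg (ae_of_all _ fun y => mul_nonneg mgf_nonneg (exp_pos _).le)
          ((htail.integrable_exp_mul t).const_mul _)
          (ae_of_all _ fun y => mul_le_mul_of_nonneg_right ((hhead y).mgf_le t) (exp_pos _).le)
    _ = exp (c₀ * t ^ 2 / 2) * mgf (fun y => F y - m) (Measure.pi fun _ => μ) t :=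
        integral_const_mul _ _
    _ ≤ exp (c₀ * t ^ 2 / 2) * exp (c * t ^ 2 / 2) := by gcongr; exact htail.mgf_le t
    _ = exp (↑(c₀ + c) * t ^ 2 / 2) := by rw [← exp_add]; push_cast; ring_nf

theorem hasSubgaussianMGF_pi_of_abs_sub_le {n : ℕ} {f : (Fin n → X) → ℝ} (hf : Measurable f)
    {C : ℝ} (hC : ∀ x, |f x| ≤ C) {c : Fin n → ℝ≥0}
    (hc : ∀ i x x', (∀ j, j ≠ i → x j = x' j) → |f x - f x'| ≤ c i) :
    HasSubgaussianMGF (fun x => f x - ∫ x', f x' ∂(Measure.pi fun _ => μ))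
      (∑ i, (c i / 2) ^ 2) (Measure.pi fun _ => μ) := by
  induction n with
  | zero =>
    have hconst : ∀ x, f x - ∫ x', f x' ∂(Measure.pi fun _ : Fin 0 => μ) = 0 := by
      intro x
      simp [integral_unique, Subsingleton.elim x default]
    simp [hconst, HasSubgaussianMGF.fun_zero]
  | succ n ih =>
    have hcons : Measurable fun p : X × (Fin n → X) => f (Fin.cons p.1 p.2) :=
      hf.comp (measurableEmbedding_finCons n).measurable
    have hsecm : ∀ y, Measurable fun a => f (Fin.cons a y) := fun y =>
      hcons.comp measurable_prodMk_right
    have hsec : ∀ y, Integrable (fun a => f (Fin.cons a y)) μ := fun y =>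
      .of_bound (hsecm y).aestronglyMeasurable C (ae_of_all _ fun a => hC _)
    set F := fun y : Fin n → X => ∫ a, f (Fin.cons a y) ∂μ
    have hF : Measurable F :=
      (StronglyMeasurable.integral_prod_left (f := fun a y => f (Fin.cons a y))
        hcons.stronglyMeasurable).measurable
    have hFC : ∀ y, |F y| ≤ C := fun y => by
      simpa using norm_integral_le_of_norm_le_const (μ := μ)
        (ae_of_all _ fun a => (Real.norm_eq_abs _).trans_le (hC (Fin.cons a y)))
    have hFc : ∀ i y y', (∀ j, j ≠ i → y j = y' j) → |F y - F y'| ≤ c i.succ := by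
      intro i y y' hyy'
      rw [← integral_sub (hsec y) (hsec y')]
      refine (norm_integral_le_of_norm_le_const (ae_of_all _ fun a =>
        (Real.norm_eq_abs _).trans_le (hc i.succ _ _ ?_))).trans ?_
      · refine Fin.cases (fun _ => rfl) (fun k hk => ?_)
        exact hyy' k (fun hki => hk (hki ▸ rfl))
      · simp
    have htail := ih hF hFC hFc
    rw [← integral_pi_fin_succ (.of_bound hf.aestronglyMeasurable C (ae_of_all _ hC))] at htail
    rw [Fin.sum_univ_succ]
    refine htail.pi_fin_succ hf hC fun y => ?_
    obtain ⟨s, hs⟩ := exists_forall_mem_Icc_of_abs_sub_le (u := fun a => f (Fin.cons a y))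
      fun a b => hc 0 _ _ (Fin.cases (fun h => absurd rfl h) (fun k _ => rfl))
    convert hasSubgaussianMGF_of_mem_Icc (hsecm y).aemeasurable
      (ae_of_all μ hs) using 2
    rw [add_sub_cancel_left, NNReal.nnnorm_eq]

end McDiarmid

section SecondMoment

variable {X : Type*} [MeasurableSpace X] {μ : Measure X} [IsProbabilityMeasure μ]
  {H : Type*} [NormedAddCommGroup H]

theorem memLp_sum_pi {h : X → H} (hh : MemLp h 2 μ) (n : ℕ) :
    MemLp (fun x : Fin n → X => ∑ i, h (x i)) 2 (Measure.pi fun _ => μ) :=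
  memLp_finsetSum _ fun i _ => hh.comp_measurePreserving (measurePreserving_eval _ i)

variable [InnerProductSpace ℝ H] [CompleteSpace H]

theorem integral_norm_sum_sq_pi {h : X → H} (hh : MemLp h 2 μ) (h0 : ∫ a, h a ∂μ = 0) (n : ℕ) :
    ∫ x, ‖∑ i, h (x i)‖ ^ 2 ∂(Measure.pi fun _ : Fin n => μ) = n * ∫ a, ‖h a‖ ^ 2 ∂μ := by
  induction n with
  | zero => simp
  | succ n ih =>
    have hsq : ∀ m, Integrable (fun x : Fin m → X => ‖∑ i, h (x i)‖ ^ 2) (Measure.pi fun _ => μ) :=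
      fun m => (memLp_sum_pi hh m).integrable_norm_pow two_ne_zero
    have hcons : ∀ (y : Fin n → X) a, ‖∑ i, h ((Fin.cons a y : Fin (n + 1) → X) i)‖ ^ 2
        = ‖h a‖ ^ 2 + 2 * ⟪∑ i, h (y i), h a⟫ + ‖∑ i, h (y i)‖ ^ 2 := by
      intro y a
      rw [Fin.sum_univ_succ, add_comm, norm_add_sq_real]
      simp only [Fin.cons_zero, Fin.cons_succ]
      ring
    have hinner : ∀ y : Fin n → X, ∫ a, ‖∑ i, h ((Fin.cons a y : Fin (n + 1) → X) i)‖ ^ 2 ∂μ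
        = ∫ a, ‖h a‖ ^ 2 ∂μ + ‖∑ i, h (y i)‖ ^ 2 := by
      intro y
      have hint := hh.integrable one_le_two
      have hsq₁ : Integrable (fun a => ‖h a‖ ^ 2) μ := hh.integrable_norm_pow two_ne_zero
      have hcross : Integrable (fun a => 2 * ⟪∑ i, h (y i), h a⟫) μ :=
        (hint.const_inner _).const_mul 2
      simp_rw [hcons]
      rw [integral_add (hsq₁.fun_add hcross) (integrable_const _), integral_add hsq₁ hcross,
        integral_const_mul, integral_inner hint, h0]
      simp
    rw [integral_pi_fin_succ (hsq _)]
    simp_rw [hinner]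
    rw [integral_add (integrable_const _) (hsq n), ih]
    simp only [integral_const, probReal_univ, one_smul, Nat.cast_succ]
    ring

theorem integral_norm_sub_integral_sq {g : X → H} (hg : MemLp g 2 μ) :
    ∫ a, ‖g a - ∫ b, g b ∂μ‖ ^ 2 ∂μ = ∫ a, ‖g a‖ ^ 2 ∂μ - ‖∫ a, g a ∂μ‖ ^ 2 := by
  set m := ∫ b, g b ∂μ
  have hint := hg.integrable one_le_two
  have hsq : Integrable (fun a => ‖g a‖ ^ 2) μ := hg.integrable_norm_pow two_ne_zero
  have hcross : Integrable (fun a => 2 * ⟪m, g a⟫) μ := (hint.const_inner m).const_mul 2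
  simp_rw [norm_sub_sq_real, real_inner_comm m]
  rw [integral_add (f := fun a => ‖g a‖ ^ 2 - 2 * ⟪m, g a⟫) (hsq.sub hcross) (integrable_const _),
    integral_sub hsq hcross, integral_const_mul, integral_inner hint, real_inner_self_eq_norm_sq]
  simp only [integral_const, probReal_univ, one_smul]
  ring

theorem integral_norm_integral_sub_average_sq {g : X → H} (hg : MemLp g 2 μ) {n : ℕ}
    (hn : 0 < n) :
    ∫ x, ‖∫ a, g a ∂μ - (1 / (n : ℝ)) • ∑ i, g (x i)‖ ^ 2 ∂(Measure.pi fun _ : Fin n => μ)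
      = (∫ a, ‖g a‖ ^ 2 ∂μ - ‖∫ a, g a ∂μ‖ ^ 2) / n := by
  set m := ∫ b, g b ∂μ
  have hn' : (n : ℝ) ≠ 0 := by positivity
  have hrescale : ∀ x : Fin n → X,
      ‖m - (1 / (n : ℝ)) • ∑ i, g (x i)‖ ^ 2 = (1 / (n : ℝ)) ^ 2 * ‖∑ i, (g (x i) - m)‖ ^ 2 := by
    intro x
    have hdiff : m - (1 / (n : ℝ)) • ∑ i, g (x i) = -((1 / (n : ℝ)) • ∑ i, (g (x i) - m)) := by
      rw [Finset.sum_sub_distrib, smul_sub, Finset.sum_const, Finset.card_univ, Fintype.card_fin,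
        ← Nat.cast_smul_eq_nsmul ℝ, smul_smul, one_div_mul_cancel hn', one_smul, neg_sub]
    rw [hdiff, norm_neg, norm_smul, mul_pow, Real.norm_of_nonneg (by positivity)]
  have hcentered : ∫ a, (g a - m) ∂μ = 0 := by
    rw [integral_sub (hg.integrable one_le_two) (integrable_const m)]
    simp [m]
  simp_rw [hrescale]
  rw [integral_const_mul,
    integral_norm_sum_sq_pi (h := fun a => g a - m) (hg.sub (memLp_const m)) hcentered,
    integral_norm_sub_integral_sq hg]
  field_simp
  rfl

end SecondMoment

theorem ProbabilityTheory.HasSubgaussianMGF.measureReal_ge_sqrt_log_le {Ω : Type*}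
    [MeasurableSpace Ω] {μ : Measure Ω} {Y : Ω → ℝ} {c : ℝ≥0} (h : HasSubgaussianMGF Y c μ)
    (hc : 0 < c) {δ : ℝ} (hδ0 : 0 < δ) (hδ1 : δ ≤ 1) :
    μ.real {ω | √(2 * c * log (1 / δ)) ≤ Y ω} ≤ δ := by
  have hL : 0 ≤ log (1 / δ) := log_nonneg (one_le_one_div hδ0 hδ1)
  have hexponent : -√(2 * c * log (1 / δ)) ^ 2 / (2 * c) = -log (1 / δ) := by
    rw [sq_sqrt (by positivity)]
    field_simp
  refine (h.measure_ge_le (sqrt_nonneg _)).trans_eq ?_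
  rw [hexponent, exp_neg, exp_log (by positivity), one_div, inv_inv]

theorem abs_norm_sub_average_sub_le {X E : Type*} [SeminormedAddCommGroup E] [NormedSpace ℝ E]
    {g : X → E} {K : ℝ} (hg : ∀ a, ‖g a‖ ≤ K) (v : E) {n : ℕ} {i : Fin n} {x x' : Fin n → X}
    (hxx' : ∀ j, j ≠ i → x j = x' j) :
    |‖v - (1 / (n : ℝ)) • ∑ j, g (x j)‖ - ‖v - (1 / (n : ℝ)) • ∑ j, g (x' j)‖| ≤ 2 * K / n := by
  have hsum : ∑ j, g (x' j) - ∑ j, g (x j) = g (x' i) - g (x i) := by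
    rw [← Finset.sum_sub_distrib]
    exact Finset.sum_eq_single_of_mem i (Finset.mem_univ i) fun j _ hj => by
      rw [hxx' j hj, sub_self]
  calc _ ≤ ‖(v - (1 / (n : ℝ)) • ∑ j, g (x j)) - (v - (1 / (n : ℝ)) • ∑ j, g (x' j))‖ :=
        abs_norm_sub_norm_le _ _
    _ = 1 / n * ‖g (x' i) - g (x i)‖ := by
        rw [sub_sub_sub_cancel_left, ← smul_sub, hsum, norm_smul,
          Real.norm_of_nonneg (by positivity)]
    _ ≤ 1 / n * (K + K) := by gcongr; exact (norm_sub_le _ _).trans (add_le_add (hg _) (hg _))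
    _ = 2 * K / n := by ring

theorem norm_average_le {X E : Type*} [SeminormedAddCommGroup E] [NormedSpace ℝ E]
    {g : X → E} {K : ℝ} (hg : ∀ a, ‖g a‖ ≤ K) {n : ℕ} (hn : 0 < n) (x : Fin n → X) :
    ‖(1 / (n : ℝ)) • ∑ i, g (x i)‖ ≤ K := by
  rw [norm_smul, Real.norm_of_nonneg (by positivity)]
  calc 1 / (n : ℝ) * ‖∑ i, g (x i)‖ ≤ 1 / n * (n * K) := by
        gcongr
        simpa using norm_sum_le_of_le Finset.univ fun i _ => hg (x i)
    _ = K := by field_simp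

section Concentration

variable {X : Type*} [MeasurableSpace X] {μ : Measure X} [IsProbabilityMeasure μ]
  {H : Type*} [NormedAddCommGroup H] [InnerProductSpace ℝ H] [CompleteSpace H]

theorem integral_norm_integral_sub_average_le {g : X → H} (hg : StronglyMeasurable g) {K : ℝ}
    (hgK : ∀ a, ‖g a‖ ≤ K) {n : ℕ} (hn : 0 < n) :
    ∫ x, ‖∫ a, g a ∂μ - (1 / (n : ℝ)) • ∑ i, g (x i)‖ ∂(Measure.pi fun _ : Fin n => μ)
      ≤ K / √n := by
  set P := Measure.pi fun _ : Fin n => μ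
  set D := fun x : Fin n → X => ‖∫ a, g a ∂μ - (1 / (n : ℝ)) • ∑ i, g (x i)‖
  have hK : 0 ≤ K := (norm_nonneg _).trans (hgK (nonempty_of_isProbabilityMeasure μ).some)
  have hg2 : MemLp g 2 μ := .of_bound hg.aestronglyMeasurable K (ae_of_all _ hgK)
  have hD2 : MemLp D 2 P := .of_bound (by fun_prop) (‖∫ a, g a ∂μ‖ + K) (ae_of_all _ fun x =>
    (norm_norm _).trans_le
      ((norm_sub_le _ _).trans (add_le_add_right (norm_average_le hgK hn x) _)))
  have hsecond : ∫ x, D x ^ 2 ∂P ≤ K ^ 2 / n := by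
    rw [integral_norm_integral_sub_average_sq hg2 hn]
    gcongr
    calc ∫ a, ‖g a‖ ^ 2 ∂μ - ‖∫ a, g a ∂μ‖ ^ 2 ≤ ∫ a, ‖g a‖ ^ 2 ∂μ := sub_le_self _ (sq_nonneg _)
      _ ≤ ∫ _, K ^ 2 ∂μ := integral_mono (hg2.integrable_norm_pow two_ne_zero)
          (integrable_const _) fun a => pow_le_pow_left₀ (norm_nonneg _) (hgK a) 2
      _ = K ^ 2 := by simp
  have hsq : (∫ x, D x ∂P) ^ 2 ≤ (K / √n) ^ 2 := by
    have hvar := variance_eq_sub hD2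
    simp only [Pi.pow_apply] at hvar
    rw [div_pow, sq_sqrt (by positivity)]
    linarith [variance_nonneg D P]
  exact (abs_le_of_sq_le_sq' hsq (by positivity)).2

theorem ofReal_one_sub_le_measure_norm_integral_sub_average_le {g : X → H}
    (hg : StronglyMeasurable g) {K : ℝ} (hK : 0 < K) (hgK : ∀ a, ‖g a‖ ≤ K) {n : ℕ} (hn : 0 < n)
    {δ : ℝ} (hδ0 : 0 < δ) (hδ1 : δ ≤ 1) :
    ENNReal.ofReal (1 - δ) ≤ (Measure.pi fun _ : Fin n => μ)
      {x | ‖∫ a, g a ∂μ - (1 / (n : ℝ)) • ∑ i, g (x i)‖ ≤ K / √n * (1 + √(2 * log (1 / δ)))} := by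
  set P := Measure.pi fun _ : Fin n => μ
  set m := ∫ a, g a ∂μ
  set D := fun x : Fin n → X => ‖m - (1 / (n : ℝ)) • ∑ i, g (x i)‖
  have hD : Measurable D := (by fun_prop : StronglyMeasurable D).measurable
  have hDC : ∀ x, |D x| ≤ ‖m‖ + K := fun x =>
    (abs_norm _).trans_le ((norm_sub_le _ _).trans (add_le_add_right (norm_average_le hgK hn x) _))
  have hc : (0 : ℝ) ≤ 2 * K / n := by positivity
  have hsub := hasSubgaussianMGF_pi_of_abs_sub_le (μ := μ) hD hDC
    (c := fun _ => (2 * K / n).toNNReal) fun i x x' hxx' => by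
      rw [Real.coe_toNNReal _ hc]
      exact abs_norm_sub_average_sub_le hgK m hxx'
  have hparam : ((∑ _i : Fin n, ((2 * K / n).toNNReal / 2) ^ 2 : ℝ≥0) : ℝ) = K ^ 2 / n := by
    push_cast [Real.coe_toNNReal _ hc]
    rw [Finset.sum_const, Finset.card_univ, Fintype.card_fin, nsmul_eq_mul]
    field_simp
  have htail := hsub.measureReal_ge_sqrt_log_le
    (by rw [← NNReal.coe_pos, hparam]; positivity) hδ0 hδ1
  have hradius : √(2 * (K ^ 2 / n) * log (1 / δ)) = K / √n * √(2 * log (1 / δ)) := by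
    rw [show 2 * (K ^ 2 / n) * log (1 / δ) = (K / √n) ^ 2 * (2 * log (1 / δ)) by
        rw [div_pow, sq_sqrt (by positivity)]; ring,
      sqrt_mul (sq_nonneg _), sqrt_sq (by positivity)]
  rw [hparam, hradius] at htail
  have hmean : ∫ x, D x ∂P ≤ K / √n := integral_norm_integral_sub_average_le hg hgK hn
  set s := {x | K / √n * √(2 * log (1 / δ)) ≤ D x - ∫ y, D y ∂P}
  have hs : MeasurableSet s := measurableSet_le measurable_const (hD.sub_const _)
  calc ENNReal.ofReal (1 - δ) ≤ P sᶜ := by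
        rw [← ofReal_measureReal, probReal_compl_eq_one_sub hs]
        exact ENNReal.ofReal_le_ofReal (by linarith)
    _ ≤ _ := measure_mono fun x hx => by
        simp only [s, Set.mem_compl_iff, Set.mem_ofPred_eq, not_le] at hx ⊢
        linarith

end Concentration

theorem target_measure_in_ambiguity_set_general
    {X : Type*} [MeasurableSpace X]
    {H : Type*} [NormedAddCommGroup H] [InnerProductSpace ℝ H] [CompleteSpace H]
    (M B : ℝ) (hM : 0 < M) (hB : 0 < B)
    (φ : X → H) (hφsm : StronglyMeasurable φ) (hφ : ∀ x, ‖φ x‖ ≤ Real.sqrt M)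
    (Ps Pt : Measure X) [IsProbabilityMeasure Ps] [IsProbabilityMeasure Pt]
    (w : X → ℝ) (hwmeas : Measurable w) (hw : ∀ x, 0 ≤ w x ∧ w x ≤ B)
    (hPt : Pt = Ps.withDensity fun x => ENNReal.ofReal (w x))
    (μt : H) (hμt : μt = ∫ x, φ x ∂Pt)
    (ns nt : ℕ) (hns : 0 < ns)
    (δ : ℝ) (hδ : δ ∈ Set.Ioo (0 : ℝ) 1)
    (ε : ℝ)
    (hε : ε = Real.sqrt M * (Real.sqrt (B ^ 2 / ns + 1 / nt) + Real.sqrt (1 / nt))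
          * (1 + Real.sqrt (2 * Real.log (1 / δ)))) :
    ((Measure.pi fun _ : Fin ns => Ps).prod (Measure.pi fun _ : Fin nt => Pt))
      {p : (Fin ns → X) × (Fin nt → X) |
        ‖μt - (1 / (ns : ℝ)) • ∑ i, w (p.1 i) • φ (p.1 i)‖ ≤ ε}
      ≥ ENNReal.ofReal (1 - 2 * δ) := by
  obtain ⟨hδ0, hδ1⟩ := hδ
  have hbound : ∀ a, ‖w a • φ a‖ ≤ B * √M := fun a => by
    rw [norm_smul, Real.norm_of_nonneg (hw a).1]
    exact mul_le_mul (hw a).2 (hφ a) (norm_nonneg _) hB.le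
  have hunbiased : ∫ a, w a • φ a ∂Ps = μt := by
    rw [hμt, hPt, integral_withDensity_eq_integral_toReal_smul hwmeas.ennreal_ofReal
      (ae_of_all _ fun _ => ENNReal.ofReal_lt_top)]
    simp_rw [ENNReal.toReal_ofReal (hw _).1]
  have hradius : B * √M / √ns * (1 + √(2 * log (1 / δ))) ≤ ε := by
    have hsqrt : B / √ns = √(B ^ 2 / ns) := by rw [sqrt_div (sq_nonneg B), sqrt_sq hB.le]
    rw [hε, show B * √M / √ns = √M * (B / √ns) by ring, hsqrt]
    gcongr
    exact le_add_of_le_of_nonneg (sqrt_le_sqrt (le_add_of_nonneg_right (by positivity)))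
      (sqrt_nonneg _)
  have hsample := ofReal_one_sub_le_measure_norm_integral_sub_average_le (μ := Ps)
    (g := fun a => w a • φ a) (hwmeas.stronglyMeasurable.smul hφsm) (by positivity) hbound hns
    hδ0 hδ1.le
  rw [hunbiased] at hsample
  calc ENNReal.ofReal (1 - 2 * δ) ≤ ENNReal.ofReal (1 - δ) := ENNReal.ofReal_le_ofReal (by linarith)
    _ ≤ _ := hsample
    _ = ((Measure.pi fun _ => Ps).prod (Measure.pi fun _ : Fin nt => Pt)) (_ ×ˢ Set.univ) := by
        rw [Measure.prod_prod, measure_univ (μ := Measure.pi fun _ : Fin nt => Pt), mul_one]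
    _ ≤ _ := measure_mono fun p hp => by exact hp.1.trans hradius

/-- Theorem 1 (containment part): with probability at least `1 − 2δ`, the target
population embedding mean `μ_t` lies within
`ε_{t'} = √M (√(B²/n_s + 1/n_t) + √(1/n_t)) (1 + √(2 log(1/δ)))`
of the weighted empirical source embedding mean, i.e. `P_t` lies in the MMD ball of
radius `ε_{t'}` centered at the weighted empirical source distribution. -/
theorem target_measure_in_ambiguity_set
    {X : Type*} [MeasurableSpace X]
    {H : Type*} [NormedAddCommGroup H] [InnerProductSpace ℝ H] [CompleteSpace H]
    (M B : ℝ) (hM : 0 < M) (hB : 0 < B)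
    (φ : X → H) (hφsm : StronglyMeasurable φ) (hφ : ∀ x, ‖φ x‖ ≤ Real.sqrt M)
    (Ps Pt : Measure X) [IsProbabilityMeasure Ps] [IsProbabilityMeasure Pt]
    (w : X → ℝ) (hwmeas : Measurable w) (hw : ∀ x, 0 ≤ w x ∧ w x ≤ B)
    (hPt : Pt = Ps.withDensity fun x => ENNReal.ofReal (w x))
    (hint : Integrable φ Pt)
    (μt : H) (hμt : μt = ∫ x, φ x ∂Pt)
    (ns nt : ℕ) (hns : 0 < ns) (hnt : 0 < nt)
    (δ : ℝ) (hδ : δ ∈ Set.Ioo (0 : ℝ) 1)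
    (ε : ℝ)
    (hε : ε = Real.sqrt M * (Real.sqrt (B ^ 2 / ns + 1 / nt) + Real.sqrt (1 / nt))
          * (1 + Real.sqrt (2 * Real.log (1 / δ)))) :
    ((Measure.pi fun _ : Fin ns => Ps).prod (Measure.pi fun _ : Fin nt => Pt))
      {p : (Fin ns → X) × (Fin nt → X) |
        ‖μt - (1 / (ns : ℝ)) • ∑ i, w (p.1 i) • φ (p.1 i)‖ ≤ ε}
      ≥ ENNReal.ofReal (1 - 2 * δ) :=
  target_measure_in_ambiguity_set_general M B hM hB φ hφsm hφ Ps Pt w hwmeas hw hPt μt hμt ns nt hns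
    δ hδ ε hε
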